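/- For every SSOT S of length n, the two-row array L(S) produced by the Sundaram construction — whose columns are the pairs (u_m over v_m) recorded at the deletion substeps m of S, listed in order of m — is a Burge array: its top row is weakly increasing, whenever two adjacent top entries are equal the corresponding bottom entries are weakly increasing, and each top entry strictly exceeds the bottom entry below it. -/

import Mathlib

open scoped BigOperators Classical

noncomputable section

/-! ### Boxes and strips -/

/-- `boxNE B B'` : the box `B'` lies weakly north and strictly east of the box `B`
(boxes are `(row, column)` pairs). -/
def boxNE (B B' : ℕ × ℕ) : Prop := B'.1 ≤ B.1 ∧ B.2 < B'.2

/-- `HStrip μ ν` : `μ ⊆ ν` and the skew shape `ν \ μ` is a horizontal strip, i.e. it has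
at most one box in every column. -/
def HStrip (μ ν : YoungDiagram) : Prop :=
  μ ≤ ν ∧ ∀ i₁ i₂ j : ℕ, (i₁, j) ∈ ν → (i₁, j) ∉ μ → (i₂, j) ∈ ν → (i₂, j) ∉ μ → i₁ = i₂

/-- `VStrip μ ν` : `μ ⊆ ν` and the skew shape `ν \ μ` is a vertical strip, i.e. it has
at most one box in every row. -/
def VStrip (μ ν : YoungDiagram) : Prop :=
  μ ≤ ν ∧ ∀ i j₁ j₂ : ℕ, (i, j₁) ∈ ν → (i, j₁) ∉ μ → (i, j₂) ∈ ν → (i, j₂) ∉ μ → j₁ = j₂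

/-- `ν` is obtained from `μ` by adding exactly one box. -/
def YCovers (μ ν : YoungDiagram) : Prop := μ ≤ ν ∧ ν.card = μ.card + 1

/-! ### Semistandard oscillating tableaux (SSOT)

An SSOT `S = (S^1, S'^2, S^2, …, S'^k, S^k)` is encoded by the number of steps `k`,
the partitions `A i = S^i` and `D i = S'^i` (with the conventions `A 0 = D 0 = D 1 = ∅`
and `A i = D (i+1) = S^k` for `i ≥ k`, i.e. the sequence is continued by the final
shape forever, and the last step is required to be nontrivial so that the number of
steps is well defined). -/

structure SSOT where
  steps : ℕ
  A : ℕ → YoungDiagram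
  D : ℕ → YoungDiagram
  hA0 : A 0 = ⊥
  hD0 : D 0 = ⊥
  hD1 : D 1 = ⊥
  stableA : ∀ i, steps ≤ i → A i = A steps
  stableD : ∀ i, steps < i → D i = A steps
  strip_del : ∀ i, 1 ≤ i → HStrip (D (i + 1)) (A i)
  strip_add : ∀ i, 2 ≤ i → HStrip (D i) (A i)
  minimal : steps ≠ 0 → ¬(D steps = A steps ∧ A steps = A (steps - 1))

namespace SSOT

/-- The shape of an SSOT. -/
def shape (S : SSOT) : YoungDiagram := S.A S.steps

/-- The multiplicity of the letter `i` in the content `‖S‖`, namely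
`|S^{i-1} \ S'^i| + |S^i \ S'^i|`. -/
def mult (S : SSOT) (i : ℕ) : ℕ :=
  if i = 0 then 0 else ((S.A (i - 1)).card - (S.D i).card) + ((S.A i).card - (S.D i).card)

/-- The length of an SSOT. -/
def length (S : SSOT) : ℕ := ∑ i ∈ Finset.range (S.steps + 1), S.mult i

/-- The weight of an SSOT, as a finitely supported exponent vector; the variable with
index `j` records the letter `j + 1`. -/
def wt (S : SSOT) : ℕ →₀ ℕ := ∑ i ∈ Finset.range S.steps, Finsupp.single i (S.mult (i + 1))

/-- `com S` : the weight vector of the profile of `S`, as a weak composition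
(the `i`-th entry is the number of letters equal to `i+1` in the profile). -/
def comList (S : SSOT) : List ℕ := (List.range S.steps).map fun i => S.mult (i + 1)

/-- `cum S i` : the position in the profile of `S` after all letters `≤ i`. -/
def cum (S : SSOT) (i : ℕ) : ℕ := ∑ j ∈ Finset.range (i + 1), S.mult j

/-- number of deletion substeps of step `i`, namely `|S^{i-1} \ S'^i|`. -/
def delc (S : SSOT) (i : ℕ) : ℕ := (S.A (i - 1)).card - (S.D i).card

/-- The letter occupying position `m` (for `1 ≤ m ≤ length`) of the profile of `S`. -/
def letterOf (S : SSOT) (m : ℕ) : ℕ := sInf {i | m ≤ S.cum i}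

end SSOT

/-- The exponent vector associated to a weak composition. -/
def listWt (c : List ℕ) : ℕ →₀ ℕ :=
  ∑ i ∈ Finset.range c.length, Finsupp.single i (c.getD i 0)

/-- The SSOT function `ss_{λ,n}` : the generating function `∑_{S ∈ SSOT_n(λ)} x^S`,
defined coefficientwise. -/
def ssotFun (l : YoungDiagram) (n : ℕ) : MvPowerSeries ℕ ℤ :=
  fun d => (Nat.card {S : SSOT // S.shape = l ∧ S.length = n ∧ S.wt = d} : ℤ)

/-- The SSOT function with rational coefficients. -/
def ssotFunQ (l : YoungDiagram) (n : ℕ) : MvPowerSeries ℕ ℚ :=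
  fun d => (Nat.card {S : SSOT // S.shape = l ∧ S.length = n ∧ S.wt = d} : ℚ)

/-- The SSOT function with complex coefficients. -/
def ssotFunC (l : YoungDiagram) (n : ℕ) : MvPowerSeries ℕ ℂ :=
  fun d => (Nat.card {S : SSOT // S.shape = l ∧ S.length = n ∧ S.wt = d} : ℂ)

/-- The full SSOT function `ss_λ = ∑_n ss_{λ,n}`. -/
def ssotFull (l : YoungDiagram) : MvPowerSeries ℕ ℤ :=
  fun d => (Nat.card {S : SSOT // S.shape = l ∧ S.wt = d} : ℤ)

/-- Setting the variables `x_{k+1} = x_{k+2} = ⋯ = 0` in a power series: only monomials in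
the first `k` variables survive. -/
def restrictVars (k : ℕ) (f : MvPowerSeries ℕ ℤ) : MvPowerSeries ℕ ℤ :=
  fun d => if ∀ i ∈ d.support, i < k then MvPowerSeries.coeff d f else 0

/-! ### Quasisymmetric functions -/

/-- A strong composition: all parts are positive. -/
def StrongComp (a : List ℕ) : Prop := ∀ x ∈ a, 0 < x

/-- `Refines b a` : the parts of `b` can be grouped into consecutive blocks whose sums
are the parts of `a`, in order. -/
def Refines (b a : List ℕ) : Prop :=
  ∃ L : List (List ℕ), L.flatten = b ∧ L.map List.sum = a

/-- The values of a finitely supported exponent vector, listed with variable indices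
increasing. -/
def sortedVals (d : ℕ →₀ ℕ) : List ℕ := (d.support.sort (· ≤ ·)).map fun i => d i

/-- The monomial quasisymmetric function `M_b`. -/
def monQSym (b : List ℕ) : MvPowerSeries ℕ ℤ :=
  fun d => if sortedVals d = b then 1 else 0

/-- Gessel's fundamental quasisymmetric function `F_a = ∑_{b ∈ ref(a)} M_b`. -/
def fundQSym (a : List ℕ) : MvPowerSeries ℕ ℤ :=
  ∑ᶠ b ∈ {b : List ℕ | StrongComp b ∧ Refines b a}, monQSym b

/-! ### Oscillating tableaux and descent compositions -/

/-- An oscillating tableau of shape `l` and length `n` : a sequence of partitions starting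
at `∅`, ending at `l` (where it stays forever), with consecutive terms differing by one box. -/
def IsOT (O : ℕ → YoungDiagram) (n : ℕ) (l : YoungDiagram) : Prop :=
  O 0 = ⊥ ∧ (∀ j, n ≤ j → O j = l) ∧
    ∀ j, j < n → YCovers (O j) (O (j + 1)) ∨ YCovers (O (j + 1)) (O j)

/-- Move `j` (from `O (j-1)` to `O j`) is an addition. -/
def IsAdd (O : ℕ → YoungDiagram) (j : ℕ) : Prop := O (j - 1) ≤ O j

/-- Position `j` is a descent of the oscillating tableau `O` : a maximal
(deletions-then-additions) segment ends at `j`.  This happens exactly when move `j+1` is a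
deletion following an addition, or two consecutive additions break the strictly-increasing
northeast order, or two consecutive deletions break the strictly-decreasing northeast order. -/
def IsDescent (O : ℕ → YoungDiagram) (j : ℕ) : Prop :=
  (IsAdd O j ∧ ¬ IsAdd O (j + 1)) ∨
  (IsAdd O j ∧ IsAdd O (j + 1) ∧
    ∃ B B' : ℕ × ℕ, B ∈ O j ∧ B ∉ O (j - 1) ∧ B' ∈ O (j + 1) ∧ B' ∉ O j ∧ ¬ boxNE B B') ∨
  (¬ IsAdd O j ∧ ¬ IsAdd O (j + 1) ∧
    ∃ B B' : ℕ × ℕ, B ∈ O (j - 1) ∧ B ∉ O j ∧ B' ∈ O j ∧ B' ∉ O (j + 1) ∧ ¬ boxNE B' B)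

/-- The descent set `Des O ⊆ {1, …, n-1}` of an oscillating tableau of length `n`. -/
def DesSet (O : ℕ → YoungDiagram) (n : ℕ) : Finset ℕ :=
  (Finset.Ico 1 n).filter (IsDescent O)

/-- successive differences of a list. -/
def diffs (L : List ℕ) : List ℕ := (L.zip (0 :: L)).map fun p => p.1 - p.2

/-- The descent composition `des O = (d₁ - d₀, …, d_k - d_{k-1})` of an oscillating tableau
of length `n`, where `Des O = {d₁ < ⋯ < d_{k-1}}`, `d₀ = 0` and `d_k = n`. -/
def desComp (O : ℕ → YoungDiagram) (n : ℕ) : List ℕ :=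
  if n = 0 then [] else diffs ((DesSet O n ∪ {n}).sort (· ≤ ·))

/-! ### Standardization -/

/-- `IsStd S O` : the oscillating tableau `O` is the standardization of the SSOT `S`;
the substeps of step `i` of `S` occupy the positions in `(cum S (i-1), cum S i]`,
first the deletions (from `S^{i-1}` down to `S'^i`, boxes strictly decreasing in the
northeast order, i.e. removed from right to left), then the additions (from `S'^i` up to
`S^i`, boxes strictly increasing in the northeast order, i.e. added from left to right). -/
def IsStd (S : SSOT) (O : ℕ → YoungDiagram) : Prop :=
  (∀ j, S.length ≤ j → O j = S.shape) ∧
  (∀ i, O (S.cum i) = S.A i) ∧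
  (∀ i, 1 ≤ i → O (S.cum (i - 1) + S.delc i) = S.D i) ∧
  (∀ i m, 1 ≤ i → S.cum (i - 1) < m → m ≤ S.cum (i - 1) + S.delc i →
    YCovers (O m) (O (m - 1))) ∧
  (∀ i m, 1 ≤ i → S.cum (i - 1) + S.delc i < m → m ≤ S.cum i →
    YCovers (O (m - 1)) (O m)) ∧
  (∀ i m, 1 ≤ i → S.cum (i - 1) < m → m + 1 ≤ S.cum (i - 1) + S.delc i →
    ∀ B B' : ℕ × ℕ, B ∈ O (m - 1) → B ∉ O m → B' ∈ O m → B' ∉ O (m + 1) → boxNE B' B) ∧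
  (∀ i m, 1 ≤ i → S.cum (i - 1) + S.delc i < m → m + 1 ≤ S.cum i →
    ∀ B B' : ℕ × ℕ, B ∈ O m → B ∉ O (m - 1) → B' ∈ O (m + 1) → B' ∉ O m → boxNE B B')

/-- An SSOT is quasi-Yamanouchi if its weight vector equals its descent composition. -/
def IsQY (S : SSOT) : Prop :=
  ∃ O : ℕ → YoungDiagram, IsStd S O ∧ S.comList = desComp O S.length

/-! ### Semistandard Young tableaux, column insertion, the Sundaram construction -/

/-- `f` is (the entry function of) a semistandard Young tableau of shape `μ`, with positive
integer entries: rows weakly increase, columns strictly increase, entries vanish outside `μ`. -/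
def IsSsytOn (μ : YoungDiagram) (f : ℕ → ℕ → ℕ) : Prop :=
  (∀ i j₁ j₂, j₁ ≤ j₂ → (i, j₂) ∈ μ → f i j₁ ≤ f i j₂) ∧
  (∀ i₁ i₂ j, i₁ < i₂ → (i₂, j) ∈ μ → f i₁ j < f i₂ j) ∧
  (∀ i j, (i, j) ∉ μ → f i j = 0) ∧
  (∀ i j, (i, j) ∈ μ → 0 < f i j)

/-- The set of semistandard Young tableaux of shape `l`. -/
def SSYTPos (l : YoungDiagram) := {f : ℕ → ℕ → ℕ // IsSsytOn l f}

/-- `ColIns f μ v g ν` : column-inserting the value `v` into the tableau `f` of shape `μ`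
produces the tableau `g` of shape `ν` (one more box): `v` is inserted in column `0`, where it
replaces the topmost entry `≥ v` (which is bumped into the next column, and so on); in the
final column `cmax` the incoming value is strictly larger than all entries and is appended
at the bottom, creating the new box. -/
def ColIns (f : ℕ → ℕ → ℕ) (μ : YoungDiagram) (v : ℕ) (g : ℕ → ℕ → ℕ) (ν : YoungDiagram) :
    Prop :=
  μ ≤ ν ∧ ν.card = μ.card + 1 ∧
  ∃ (cmax : ℕ) (w rr : ℕ → ℕ),
    w 0 = v ∧
    (∀ j, j < cmax →
      (rr j, j) ∈ μ ∧ w j ≤ f (rr j) j ∧ (∀ i, i < rr j → f i j < w j) ∧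
      w (j + 1) = f (rr j) j ∧ g (rr j) j = w j) ∧
    (∀ i, (i, cmax) ∈ μ → f i cmax < w cmax) ∧
    (rr cmax, cmax) ∉ μ ∧ (rr cmax, cmax) ∈ ν ∧ g (rr cmax) cmax = w cmax ∧
    (∀ i j, ¬(j ≤ cmax ∧ i = rr j) → g i j = f i j)

/-- The Sundaram construction along an SSOT `S` with standardization `O`: a sequence of
semistandard Young tableaux `T m` of shape `O m`; at an addition substep the new box receives
the current letter of `S`; at a deletion substep the entry in the removed box is
column-unbumped, ejecting the value `v m` (equivalently, column-inserting `v m` into `T m`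
recovers `T (m-1)`). -/
def SundaramBuild (S : SSOT) (O : ℕ → YoungDiagram) (T : ℕ → ℕ → ℕ → ℕ) (v : ℕ → ℕ) : Prop :=
  (∀ i j, T 0 i j = 0) ∧
  (∀ m, IsSsytOn (O m) (T m)) ∧
  (∀ m, 1 ≤ m → m ≤ S.length →
    (YCovers (O (m - 1)) (O m) →
      (∀ B : ℕ × ℕ, B ∈ O m → B ∉ O (m - 1) → T m B.1 B.2 = S.letterOf m) ∧
      (∀ i j : ℕ, ((i, j) ∈ O m → (i, j) ∈ O (m - 1)) → T m i j = T (m - 1) i j)) ∧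
    (YCovers (O m) (O (m - 1)) →
      ColIns (T m) (O m) (v m) (T (m - 1)) (O (m - 1))))

/-- A Burge (two-row, lexicographic, column-strict) array, stored as the list of its
columns `(top, bottom)`. -/
structure BurgeArray where
  cols : List (ℕ × ℕ)
  pos : ∀ p ∈ cols, 0 < p.2
  burge : ∀ p ∈ cols, p.2 < p.1
  lex : cols.Chain' fun p q => p.1 < q.1 ∨ (p.1 = q.1 ∧ p.2 ≤ q.2)

/-- The two-row array recorded by the Sundaram construction: the pairs
`(letter, ejected value)` at the deletion substeps, in order. -/
def delList (S : SSOT) (O : ℕ → YoungDiagram) (v : ℕ → ℕ) : List (ℕ × ℕ) :=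
  (((List.range (S.length + 1)).filter fun m =>
      decide (1 ≤ m ∧ YCovers (O m) (O (m - 1))))).map fun m => (S.letterOf m, v m)

/-- The weight of (the entry function of) a tableau of shape `l`; the variable with
index `j` records the entry `j + 1`. -/
def tabWt (l : YoungDiagram) (f : ℕ → ℕ → ℕ) : ℕ →₀ ℕ :=
  ∑ c ∈ l.cells, Finsupp.single (f c.1 c.2 - 1) 1

/-- The Schur function `s_l`, as the generating function of semistandard Young tableaux
of shape `l`, defined coefficientwise. -/
def schur (l : YoungDiagram) : MvPowerSeries ℕ ℤ :=
  fun d => (Nat.card {T : SSYTPos l // tabWt l T.1 = d} : ℤ)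

/-- The Schur function with rational coefficients. -/
def schurQ (l : YoungDiagram) : MvPowerSeries ℕ ℚ :=
  fun d => (Nat.card {T : SSYTPos l // tabWt l T.1 = d} : ℚ)

/-- The expansion of the product `∏_{i<j} (1 - x_i x_j)` : the coefficient of a monomial is
the signed count of the sets of pairs `i < j` summing to its exponent vector. -/
def littlewoodProd : MvPowerSeries ℕ ℤ :=
  fun d => ∑ᶠ F ∈ {F : Finset (ℕ × ℕ) | (∀ p ∈ F, p.1 < p.2) ∧
      (∑ p ∈ F, (Finsupp.single p.1 1 + Finsupp.single p.2 1)) = d},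
    ((-1 : ℤ) ^ F.card)

/-! ### Vertical strip closures, dominance, special shapes -/

/-- Every column of `β` has even length, i.e. the conjugate partition `β'` is even. -/
def EvenConj (β : YoungDiagram) : Prop := ∀ j, Even (β.colLen j)

/-- `VReach μ ν` : `ν` is obtained from `μ` by successively adding vertical strips of even
size. -/
inductive VReach : YoungDiagram → YoungDiagram → Prop
  | refl (μ : YoungDiagram) : VReach μ μ
  | step {μ ν ρ : YoungDiagram} : VReach μ ν → VStrip ν ρ → Even (ρ.card - ν.card) →
      VReach μ ρ

/-- Dominance order: `Dom μ ν` means `ν ≤ μ`, i.e. all partial sums of the parts of `ν`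
are at most those of `μ`. -/
def Dom (μ ν : YoungDiagram) : Prop :=
  ∀ i, ∑ j ∈ Finset.range i, ν.rowLen j ≤ ∑ j ∈ Finset.range i, μ.rowLen j

/-- The square Young diagram with `m` rows of length `m`. -/
def squareYD (m : ℕ) : YoungDiagram where
  cells := Finset.range m ×ˢ Finset.range m
  isLowerSet := by
    rintro ⟨a1, a2⟩ ⟨b1, b2⟩ ⟨h1, h2⟩ ha
    simp only [Finset.coe_product, Set.mem_prod, Finset.mem_coe, Finset.mem_range] at ha ⊢
    omega

/-- The partition `λ̄ = (λ₁ + r, λ₂ + r, λ₃, …, λ_l)`. -/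
def barYD (l : YoungDiagram) (r : ℕ) : YoungDiagram where
  cells :=
    (l.cells.filter fun c => 2 ≤ c.1) ∪
      ({0} : Finset ℕ) ×ˢ Finset.range (l.rowLen 0 + r) ∪
      ({1} : Finset ℕ) ×ˢ Finset.range (l.rowLen 1 + r)
  isLowerSet := by
    have h01 : l.rowLen 1 ≤ l.rowLen 0 := l.rowLen_anti 0 1 (by omega)
    rintro ⟨a1, a2⟩ ⟨b1, b2⟩ ⟨h1, h2⟩ ha
    simp only [Finset.coe_union, Set.mem_union, Finset.mem_coe, Finset.mem_filter,
      Finset.mem_product, Finset.mem_singleton, Finset.mem_range] at ha ⊢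
    rcases ha with ((⟨hmem, hge⟩ | ⟨ha1, ha2⟩) | ⟨ha1, ha2⟩)
    · have hlt : a2 < l.rowLen a1 := YoungDiagram.mem_iff_lt_rowLen.mp
        (by simpa using hmem)
      rcases Nat.lt_or_ge b1 2 with hb | hb
      · have h1a : l.rowLen a1 ≤ l.rowLen 1 := l.rowLen_anti 1 a1 (by omega)
        rcases Nat.lt_or_ge b1 1 with hb0 | hb1
        · exact Or.inl (Or.inr ⟨by omega, by omega⟩)
        · exact Or.inr ⟨by omega, by omega⟩
      · refine Or.inl (Or.inl ⟨?_, by omega⟩)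
        have := l.isLowerSet (a := (a1, a2)) (b := (b1, b2)) ⟨h1, h2⟩ (by simpa using hmem)
        simpa using this
    · exact Or.inl (Or.inr ⟨by omega, by omega⟩)
    · rcases Nat.lt_or_ge b1 1 with hb0 | hb1
      · exact Or.inl (Or.inr ⟨by omega, by omega⟩)
      · exact Or.inr ⟨by omega, by omega⟩

end

/-! ### Auxiliary lemmas for the Burge array theorem -/

section BurgeAux

lemma SSOT.mult_zero' (S : SSOT) : S.mult 0 = 0 := by simp [SSOT.mult]

lemma SSOT.cum_mono' (S : SSOT) : Monotone S.cum := by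
  intro a b hab
  exact Finset.sum_le_sum_of_subset (Finset.range_subset_range.2 (by omega))

lemma SSOT.cum_zero' (S : SSOT) : S.cum 0 = 0 := by
  simp [SSOT.cum, SSOT.mult_zero']

lemma SSOT.cum_succ' (S : SSOT) (i : ℕ) : S.cum (i + 1) = S.cum i + S.mult (i + 1) :=
  Finset.sum_range_succ _ _

lemma SSOT.mult_eq_zero' (S : SSOT) {i : ℕ} (hi : S.steps < i) : S.mult i = 0 := by
  have h0 : i ≠ 0 := by omega
  have hA1 : S.A (i - 1) = S.A S.steps := S.stableA _ (by omega)
  have hA2 : S.A i = S.A S.steps := S.stableA _ (by omega)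
  have hD : S.D i = S.A S.steps := S.stableD _ hi
  simp [SSOT.mult, h0, hA1, hA2, hD]

lemma SSOT.cum_steps' (S : SSOT) : S.cum S.steps = S.length := rfl

lemma SSOT.cum_le_length' (S : SSOT) {i : ℕ} (hi : i ≤ S.steps) : S.cum i ≤ S.length := by
  rw [← S.cum_steps']; exact S.cum_mono' hi

lemma SSOT.letter_bracket' (S : SSOT) {m : ℕ} (h1 : 1 ≤ m) (h2 : m ≤ S.length) :
    1 ≤ S.letterOf m ∧ S.cum (S.letterOf m - 1) < m ∧ m ≤ S.cum (S.letterOf m) ∧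
      S.letterOf m ≤ S.steps := by
  unfold SSOT.letterOf
  have hne : S.steps ∈ {i | m ≤ S.cum i} := by
    simp only [Set.mem_setOf_eq, S.cum_steps']; exact h2
  have hmem : m ≤ S.cum (sInf {i | m ≤ S.cum i}) := Nat.sInf_mem ⟨S.steps, hne⟩
  have hle : sInf {i | m ≤ S.cum i} ≤ S.steps := Nat.sInf_le hne
  have hpos : 1 ≤ sInf {i | m ≤ S.cum i} := by
    by_contra h
    have h0 : sInf {i | m ≤ S.cum i} = 0 := by omega
    rw [h0, S.cum_zero'] at hmem; omega
  refine ⟨hpos, ?_, hmem, hle⟩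
  by_contra h
  push_neg at h
  have : sInf {i | m ≤ S.cum i} ≤ sInf {i | m ≤ S.cum i} - 1 := Nat.sInf_le h
  omega

lemma SSOT.delc_le' (S : SSOT) {i : ℕ} (hi : 1 ≤ i) :
    S.cum (i - 1) + S.delc i ≤ S.cum i := by
  obtain ⟨j, rfl⟩ : ∃ j, i = j + 1 := ⟨i - 1, by omega⟩
  have hcs := S.cum_succ' j
  have h0 : j + 1 ≠ 0 := by omega
  have hm : S.delc (j + 1) ≤ S.mult (j + 1) := by
    unfold SSOT.mult SSOT.delc
    rw [if_neg h0]
    omega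
  simpa using by omega

lemma ycovers_asymm' {a b : YoungDiagram} (h1 : YCovers a b) (h2 : YCovers b a) : False := by
  obtain ⟨_, h1⟩ := h1; obtain ⟨_, h2⟩ := h2; omega

lemma ymem_of_le' {μ ν : YoungDiagram} (h : μ ≤ ν) {c : ℕ × ℕ} (hc : c ∈ μ) : c ∈ ν :=
  (YoungDiagram.mem_cells c).mp
    (YoungDiagram.cells_subset_iff.mpr h ((YoungDiagram.mem_cells c).mpr hc))

lemma box_unique' {μ ν : YoungDiagram} (hle : μ ≤ ν) (hcard : ν.card = μ.card + 1)
    {B B' : ℕ × ℕ} (hB : B ∈ ν) (hB' : B ∉ μ) (hC : B' ∈ ν) (hC' : B' ∉ μ) : B = B' := by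
  have hsub : μ.cells ⊆ ν.cells := YoungDiagram.cells_subset_iff.mpr hle
  have h1 : (ν.cells \ μ.cells).card = 1 := by
    rw [Finset.card_sdiff_of_subset hsub]
    show ν.card - μ.card = 1
    omega
  obtain ⟨c, hc⟩ := Finset.card_eq_one.mp h1
  have hBc : B ∈ ν.cells \ μ.cells :=
    Finset.mem_sdiff.mpr ⟨(YoungDiagram.mem_cells _).mpr hB,
      fun h => hB' ((YoungDiagram.mem_cells _).mp h)⟩
  have hCc : B' ∈ ν.cells \ μ.cells :=
    Finset.mem_sdiff.mpr ⟨(YoungDiagram.mem_cells _).mpr hC,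
      fun h => hC' ((YoungDiagram.mem_cells _).mp h)⟩
  rw [hc, Finset.mem_singleton] at hBc hCc
  rw [hBc, hCc]

lemma move_class' (S : SSOT) (O : ℕ → YoungDiagram) (hO : IsStd S O) {m : ℕ}
    (h1 : 1 ≤ m) (h2 : m ≤ S.length) :
    (m ≤ S.cum (S.letterOf m - 1) + S.delc (S.letterOf m) ∧ YCovers (O m) (O (m - 1))) ∨
    (S.cum (S.letterOf m - 1) + S.delc (S.letterOf m) < m ∧ YCovers (O (m - 1)) (O m)) := by
  obtain ⟨hi1, hlt, hle, _⟩ := S.letter_bracket' h1 h2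
  obtain ⟨_, _, _, hdel, hadd, _, _⟩ := hO
  rcases le_or_gt m (S.cum (S.letterOf m - 1) + S.delc (S.letterOf m)) with h | h
  · exact Or.inl ⟨h, hdel _ _ hi1 hlt h⟩
  · exact Or.inr ⟨h, hadd _ _ hi1 h hle⟩

lemma chain_le' (cmax : ℕ) (w : ℕ → ℕ) (h : ∀ j, j < cmax → w j ≤ w (j + 1)) :
    w 0 ≤ w cmax := by
  induction cmax with
  | zero => exact le_rfl
  | succ n ih => exact le_trans (ih fun j hj => h j (by omega)) (h n (by omega))

lemma entry_bound' (S : SSOT) (O : ℕ → YoungDiagram) (hO : IsStd S O)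
    (T : ℕ → ℕ → ℕ → ℕ) (v : ℕ → ℕ) (hT : SundaramBuild S O T v) :
    ∀ m, m ≤ S.length → ∀ k,
      (∀ m', 1 ≤ m' → m' ≤ m → YCovers (O (m' - 1)) (O m') → S.letterOf m' ≤ k) →
      ∀ a b, (a, b) ∈ O m → T m a b ≤ k := by
  intro m
  induction m with
  | zero =>
    intro _ k _ a b _
    rw [hT.1 a b]
    exact Nat.zero_le k
  | succ n ih =>
    intro hlen k hk a b hab
    have hn : n ≤ S.length := by omega
    have ihk : ∀ a b, (a, b) ∈ O n → T n a b ≤ k :=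
      ih hn k fun m' hx1 hx2 hx3 => hk m' hx1 (by omega) hx3
    have hmove := move_class' S O hO (m := n + 1) (by omega) hlen
    simp only [Nat.add_sub_cancel] at hmove
    have hsund := hT.2.2 (n + 1) (by omega) hlen
    simp only [Nat.add_sub_cancel] at hsund
    rcases hmove with ⟨_, hdel⟩ | ⟨_, hadd⟩
    · have hci := hsund.2 hdel
      obtain ⟨hsub, hcard, cmax, w, rr, hw0, hbump, hterm, hnotin, hin, hgnew, hgoth⟩ := hci
      by_cases hc : b ≤ cmax ∧ a = rr b
      · obtain ⟨hb, rfl⟩ := hc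
        rcases eq_or_lt_of_le hb with h | h
        · subst h
          exact absurd hab hnotin
        · have hd := hbump b h
          have hTval : T (n + 1) (rr b) b = w (b + 1) := hd.2.2.2.1.symm
          rcases eq_or_lt_of_le (show b + 1 ≤ cmax by omega) with he | hlt2
          · rw [hTval, he, ← hgnew]
            exact ihk _ _ hin
          · have hd2 := hbump (b + 1) hlt2
            rw [hTval, ← hd2.2.2.2.2]
            exact ihk _ _ (ymem_of_le' hsub hd2.1)
      · rw [← hgoth a b hc]
        exact ihk a b (ymem_of_le' hsub hab)
    · have hrec := hsund.1 hadd
      by_cases hab' : (a, b) ∈ O n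
      · rw [hrec.2 a b fun _ => hab']
        exact ihk a b hab'
      · rw [hrec.1 (a, b) hab hab']
        exact hk (n + 1) (by omega) le_rfl (by simpa using hadd)

lemma colins_eject_mono' {μ' μ ν : YoungDiagram} {f' f g : ℕ → ℕ → ℕ} {v' v : ℕ}
    (hf' : IsSsytOn μ' f')
    (h1 : ColIns f' μ' v' f μ) (h2 : ColIns f μ v g ν)
    (hbox : ∀ B B' : ℕ × ℕ, B ∈ ν → B ∉ μ → B' ∈ μ → B' ∉ μ' → B'.2 < B.2) :
    v ≤ v' := by
  by_contra hvv
  push_neg at hvv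
  obtain ⟨hsub1, hcard1, cmax', w', rr', hw'0, hbump', hterm', hnotin', hin', hgnew', hgoth'⟩ := h1
  obtain ⟨hsub2, hcard2, cmax, w, rr, hw0, hbump, hterm, hnotin, hin, hgnew, hgoth⟩ := h2
  have hcc : cmax' < cmax := hbox (rr cmax, cmax) (rr' cmax', cmax') hin hnotin hin' hnotin'
  have huniq : ∀ c : ℕ × ℕ, c ∈ μ → c.2 ≠ cmax' → c ∈ μ' := by
    intro c hc hne
    by_contra h
    have := box_unique' hsub1 hcard1 hc h hin' hnotin'
    exact hne (by rw [this])
  have key : ∀ j, j ≤ cmax' → w' j < w j := by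
    intro j
    induction j with
    | zero => intro _; rw [hw'0, hw0]; exact hvv
    | succ n ihn =>
      intro hj
      have hn' : n < cmax' := by omega
      have hn : n < cmax := by omega
      have hwn : w' n < w n := ihn (by omega)
      obtain ⟨hm1, hle1, htop1, hw1, hg1⟩ := hbump' n hn'
      obtain ⟨hm2, hle2, htop2, hw2, hg2⟩ := hbump n hn
      have hne : rr n ≠ rr' n := by
        intro h
        rw [h, hg1] at hle2
        omega
      have hlt : rr' n < rr n := by
        rcases lt_or_gt_of_ne hne with h | h
        · exfalso
          have hfeq : f (rr n) n = f' (rr n) n :=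
            hgoth' _ _ fun hcontra => hne hcontra.2
          have := htop1 (rr n) h
          omega
        · exact h
      have hfeq : f (rr n) n = f' (rr n) n := hgoth' _ _ fun hcontra => hne hcontra.2
      have hmem' : (rr n, n) ∈ μ' := huniq _ hm2 (by simp; omega)
      have hcol := hf'.2.1 (rr' n) (rr n) n hlt hmem'
      rw [hw1, hw2]
      omega
  have hklast := key cmax' le_rfl
  obtain ⟨hm2, hle2, htop2, hw2, hg2⟩ := hbump cmax' hcc
  by_cases hcase : rr cmax' = rr' cmax'
  · rw [hcase, hgnew'] at hle2
    omega
  · have hfeq : f (rr cmax') cmax' = f' (rr cmax') cmax' :=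
      hgoth' _ _ fun hcontra => hcase hcontra.2
    have hmem' : (rr cmax', cmax') ∈ μ' := by
      by_contra h
      have := box_unique' hsub1 hcard1 hm2 h hin' hnotin'
      exact hcase (congrArg Prod.fst this)
    have := hterm' _ hmem'
    omega

lemma eject_mono_consec' (S : SSOT) (O : ℕ → YoungDiagram) (hO : IsStd S O)
    (T : ℕ → ℕ → ℕ → ℕ) (v : ℕ → ℕ) (hT : SundaramBuild S O T v)
    {i p : ℕ} (hi : 1 ≤ i) (his : i ≤ S.steps)
    (hp1 : S.cum (i - 1) < p) (hp2 : p + 1 ≤ S.cum (i - 1) + S.delc i) :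
    v p ≤ v (p + 1) := by
  have hcum : S.cum i ≤ S.length := S.cum_le_length' his
  have hdle := S.delc_le' hi
  have hplen : p + 1 ≤ S.length := by omega
  obtain ⟨hlen, hA, hD, hdel, hadd, hdelbox, haddbox⟩ := hO
  have hdel1 : YCovers (O p) (O (p - 1)) := hdel i p hi hp1 (by omega)
  have hdel2 : YCovers (O (p + 1)) (O p) := by
    have := hdel i (p + 1) hi (by omega) hp2
    simpa using this
  have hci1 := (hT.2.2 p (by omega) (by omega)).2 hdel1
  have hci2 := (hT.2.2 (p + 1) (by omega) hplen).2 (by simpa using hdel2)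
  simp only [Nat.add_sub_cancel] at hci2
  have hbox := hdelbox i p hi hp1 hp2
  exact colins_eject_mono' (hT.2.1 (p + 1)) hci2 hci1
    fun B B' hB hB' hC hC' => (hbox B B' hB hB' hC hC').2

lemma eject_mono_range' (S : SSOT) (O : ℕ → YoungDiagram) (hO : IsStd S O)
    (T : ℕ → ℕ → ℕ → ℕ) (v : ℕ → ℕ) (hT : SundaramBuild S O T v)
    {i : ℕ} (hi : 1 ≤ i) (his : i ≤ S.steps) :
    ∀ d p, S.cum (i - 1) < p → p + d ≤ S.cum (i - 1) + S.delc i → v p ≤ v (p + d) := by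
  intro d
  induction d with
  | zero => intro p _ _; exact le_rfl
  | succ n ihn =>
    intro p hp1 hp2
    have h1 : v p ≤ v (p + n) := ihn p hp1 (by omega)
    have h2 : v (p + n) ≤ v (p + n + 1) :=
      eject_mono_consec' S O hO T v hT hi his (by omega) (by omega)
    have he : p + (n + 1) = p + n + 1 := rfl
    rw [he]
    exact le_trans h1 h2

end BurgeAux


/-- **The recorded array is Burge.**  For every SSOT `S`, the two-row array produced by the
Sundaram construction — whose columns are the pairs `(u_m, v_m)` recorded at the deletion
substeps `m`, in order — is a Burge array: the top row is weakly increasing, whenever two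
top entries are equal the corresponding bottom entries are weakly increasing, and each top
entry strictly exceeds the bottom entry below it. -/
theorem sundaram_array_is_burge (S : SSOT) (O : ℕ → YoungDiagram) (hO : IsStd S O)
    (T : ℕ → ℕ → ℕ → ℕ) (v : ℕ → ℕ) (hT : SundaramBuild S O T v) :
    (∀ m, 1 ≤ m → m ≤ S.length → YCovers (O m) (O (m - 1)) → v m < S.letterOf m) ∧
    (∀ m m', 1 ≤ m → m ≤ m' → m' ≤ S.length →
      YCovers (O m) (O (m - 1)) → YCovers (O m') (O (m' - 1)) →
      S.letterOf m ≤ S.letterOf m' ∧ (S.letterOf m = S.letterOf m' → v m ≤ v m')) := by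
  constructor
  · intro m h1 h2 hdel
    obtain ⟨hi1, hlt, hle, his⟩ := S.letter_bracket' h1 h2
    have hmdel : m ≤ S.cum (S.letterOf m - 1) + S.delc (S.letterOf m) := by
      rcases move_class' S O hO h1 h2 with ⟨h, _⟩ | ⟨_, hadd⟩
      · exact h
      · exact (ycovers_asymm' hdel hadd).elim
    have hbound : ∀ a b, (a, b) ∈ O (m - 1) → T (m - 1) a b ≤ S.letterOf m - 1 := by
      apply entry_bound' S O hO T v hT (m - 1) (by omega)
      intro m' hm'1 hm'2 haddm'
      have hm'len : m' ≤ S.length := by omega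
      obtain ⟨hj1, hjlt, hjle, hjs⟩ := S.letter_bracket' hm'1 hm'len
      have haddc : S.cum (S.letterOf m' - 1) + S.delc (S.letterOf m') < m' := by
        rcases move_class' S O hO hm'1 hm'len with ⟨_, hd⟩ | ⟨h, _⟩
        · exact (ycovers_asymm' hd haddm').elim
        · exact h
      by_contra hcon
      push_neg at hcon
      rcases eq_or_lt_of_le (show S.letterOf m ≤ S.letterOf m' by omega) with heq | hlt'
      · rw [← heq] at haddc
        omega
      · have : S.cum (S.letterOf m) ≤ S.cum (S.letterOf m' - 1) := S.cum_mono' (by omega)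
        omega
    have hci := (hT.2.2 m h1 h2).2 hdel
    obtain ⟨hsub, hcard, cmax, w, rr, hw0, hbump, hterm, hnotin, hin, hgnew, hgoth⟩ := hci
    have hwchain : w 0 ≤ w cmax := by
      apply chain_le'
      intro j hj
      obtain ⟨_, hle', _, hw', _⟩ := hbump j hj
      omega
    have hval : T (m - 1) (rr cmax) cmax ≤ S.letterOf m - 1 := hbound _ _ hin
    omega
  · intro m m' h1 hmm' h2 hdelm hdelm'
    have hm2 : m ≤ S.length := le_trans hmm' h2
    have hmono : S.letterOf m ≤ S.letterOf m' := by
      have hmem : m' ≤ S.cum (S.letterOf m') := (S.letter_bracket' (by omega) h2).2.2.1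
      exact Nat.sInf_le (show m ≤ S.cum (S.letterOf m') by omega)
    refine ⟨hmono, fun heq => ?_⟩
    obtain ⟨hi1, hlt, hle, his⟩ := S.letter_bracket' h1 hm2
    have hmdel : m ≤ S.cum (S.letterOf m - 1) + S.delc (S.letterOf m) := by
      rcases move_class' S O hO h1 hm2 with ⟨h, _⟩ | ⟨_, hadd⟩
      · exact h
      · exact (ycovers_asymm' hdelm hadd).elim
    have hm'del : m' ≤ S.cum (S.letterOf m - 1) + S.delc (S.letterOf m) := by
      rcases move_class' S O hO (show 1 ≤ m' by omega) h2 with ⟨h, _⟩ | ⟨_, hadd⟩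
      · rwa [← heq] at h
      · exact (ycovers_asymm' hdelm' hadd).elim
    obtain ⟨d, rfl⟩ : ∃ d, m' = m + d := ⟨m' - m, by omega⟩
    exact eject_mono_range' S O hO T v hT hi1 his d m hlt hm'del
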